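/- A uniformly discrete space X of bounded geometry is non-amenable if and only if the fundamental class [X] (the 0-chain assigning 1 to every point) vanishes in H₀^{uf}(X; ℤ). -/

import Mathlib

/-- The closed `r`-neighborhood of a set `A`. -/
def nbhd {Z : Type*} [MetricSpace Z] (r : ℝ) (A : Set Z) : Set Z :=
  {z | ∃ a ∈ A, dist z a ≤ r}

/-- The `r`-boundary of `A`: points outside `A` within distance `r` of `A`. -/
def bdry {Z : Type*} [MetricSpace Z] (r : ℝ) (A : Set Z) : Set Z :=
  nbhd r A \ A

/-- Uniformly discrete metric space. -/
def UniformlyDiscrete (Z : Type*) [MetricSpace Z] : Prop :=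
  ∃ r > (0 : ℝ), ∀ x y : Z, dist x y < r → x = y

/-- Bounded geometry: balls of radius `r` have at most `N_r` points. -/
def BoundedGeometry (Z : Type*) [MetricSpace Z] : Prop :=
  ∀ r : ℝ, ∃ N : ℕ, ∀ x : Z, {y : Z | dist y x ≤ r}.Finite ∧
    {y : Z | dist y x ≤ r}.ncard ≤ N

/-- A uniformly finite 1-chain with coefficients in a normed ring `R`:
coefficients on ordered pairs (edges), uniformly bounded, supported on edges of
uniformly bounded length, and locally finite at each vertex. -/
def IsUFOneChain {Z : Type*} [MetricSpace Z] {R : Type*} [NormedRing R]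
    (b : Z → Z → R) : Prop :=
  (∃ M : ℝ, ∀ z w : Z, ‖b z w‖ ≤ M) ∧
  (∃ l : ℝ, ∀ z w : Z, b z w ≠ 0 → dist z w ≤ l) ∧
  (∀ z : Z, {w : Z | b z w ≠ 0 ∨ b w z ≠ 0}.Finite)

/-- The boundary of a 1-chain at a vertex `z`: net flow into `z`. -/
noncomputable def ufBoundaryAt {Z : Type*} [MetricSpace Z] {R : Type*} [NormedRing R]
    (b : Z → Z → R) (z : Z) : R :=
  (∑ᶠ w : Z, b w z) - ∑ᶠ w : Z, b z w

/-- A 0-chain `c` represents `0` in `H₀^{uf}(Z; R)` iff it is the boundary of a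
uniformly finite 1-chain. -/
def UFBoundsZero {Z : Type*} [MetricSpace Z] {R : Type*} [NormedRing R]
    (c : Z → R) : Prop :=
  ∃ b : Z → Z → R, IsUFOneChain b ∧ ∀ z : Z, c z = ufBoundaryAt b z

/-- Amenability: existence of a regular (Følner) sequence of finite nonempty sets
whose relative `r`-boundaries tend to `0` for every `r > 0`. -/
def Amenable (Z : Type*) [MetricSpace Z] : Prop :=
  ∃ S : ℕ → Set Z, (∀ i, (S i).Finite ∧ (S i).Nonempty) ∧
    ∀ r > (0 : ℝ), Filter.Tendsto
      (fun i => ((bdry r (S i)).ncard : ℝ) / ((S i).ncard : ℝ))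
      Filter.atTop (nhds 0)

/-!
By Følner's criterion, non-amenability is an isoperimetric inequality `|S| ≤ C |∂_r S|`. Iterated,
it gives `|N_{kr}(S)| ≥ (1 + 1/C)^k |S|`, so for large `k` Hall's marriage theorem yields an
injection `j : X × {0, 1} → X` of bounded displacement. Sending one unit from each `j (x, i)` to `x`
leaves a surplus of one unit exactly at the points outside the range of `j`; pushing it to infinity
along rays gives a uniformly finite 1-chain with boundary `1`. Conversely, if `∂b = 1`, summing over
a finite `S` cancels the edges inside `S`, so `|S|` is at most the flow of `b` across `∂_r S`, which
is bounded by a constant times `|∂_r S|`.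
-/

open Set Filter

section Neighborhoods

variable {X : Type*} [MetricSpace X]

lemma subset_nbhd {r : ℝ} (hr : 0 ≤ r) (A : Set X) : A ⊆ nbhd r A :=
  fun a ha => ⟨a, ha, by simpa using hr⟩

lemma nbhd_mono {r s : ℝ} (h : r ≤ s) (A : Set X) : nbhd r A ⊆ nbhd s A :=
  fun _ ⟨a, ha, hd⟩ => ⟨a, ha, hd.trans h⟩

lemma bdry_mono {r s : ℝ} (h : r ≤ s) (A : Set X) : bdry r A ⊆ bdry s A :=
  sdiff_subset_sdiff_left (nbhd_mono h A)

lemma nbhd_nbhd_subset (r s : ℝ) (A : Set X) : nbhd r (nbhd s A) ⊆ nbhd (s + r) A := by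
  rintro z ⟨y, ⟨a, ha, hya⟩, hzy⟩
  exact ⟨a, ha, by linarith [dist_triangle z y a]⟩

lemma BoundedGeometry.finite_nbhd (hbg : BoundedGeometry X) {A : Set X} (hA : A.Finite)
    (r : ℝ) : (nbhd r A).Finite := by
  obtain ⟨_, hN⟩ := hbg r
  refine (hA.biUnion fun a _ => (hN a).1).subset ?_
  rintro z ⟨a, ha, h⟩
  exact mem_biUnion ha h

lemma BoundedGeometry.finite_bdry (hbg : BoundedGeometry X) {A : Set X} (hA : A.Finite)
    (r : ℝ) : (bdry r A).Finite :=
  (hbg.finite_nbhd hA r).subset sdiff_subset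

lemma BoundedGeometry.ncard_nbhd (hbg : BoundedGeometry X) {A : Set X} (hA : A.Finite)
    {r : ℝ} (hr : 0 ≤ r) : (nbhd r A).ncard = A.ncard + (bdry r A).ncard := by
  rw [bdry, ← ncard_union_eq disjoint_sdiff_right hA (hbg.finite_bdry hA r),
    union_sdiff_cancel (subset_nbhd hr A)]

end Neighborhoods

def IsoperimetricWith (X : Type*) [MetricSpace X] (C r : ℝ) : Prop :=
  ∀ S : Set X, S.Finite → (S.ncard : ℝ) ≤ C * (bdry r S).ncard

section Isoperimetry

variable {X : Type*} [MetricSpace X]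

lemma IsoperimetricWith.not_amenable {C r : ℝ} (hC : 0 < C) (hr : 0 < r)
    (hiso : IsoperimetricWith X C r) : ¬ Amenable X := by
  rintro ⟨S, hS, hFolner⟩
  obtain ⟨i, hi⟩ := ((hFolner r hr).eventually (gt_mem_nhds (inv_pos.mpr hC))).exists
  have hSpos : (0 : ℝ) < (S i).ncard := by exact_mod_cast (ncard_pos (hS i).1).mpr (hS i).2
  rw [div_lt_iff₀ hSpos] at hi
  have := hiso (S i) (hS i).1
  nlinarith [mul_inv_cancel₀ hC.ne']

lemma exists_isoperimetricWith_of_not_amenable (hbg : BoundedGeometry X)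
    (h : ¬ Amenable X) : ∃ C r, 0 < C ∧ 0 < r ∧ IsoperimetricWith X C r := by
  by_contra! hc
  apply h
  have hbad (i : ℕ) : ∃ S : Set X, S.Finite ∧
      ((i : ℝ) + 1) * (bdry ((i : ℝ) + 1) S).ncard < S.ncard := by
    simpa [IsoperimetricWith] using hc ((i : ℝ) + 1) ((i : ℝ) + 1) (by positivity) (by positivity)
  choose S hSfin hSlt using hbad
  have hSpos (i : ℕ) : (0 : ℝ) < (S i).ncard := lt_of_le_of_lt (by positivity) (hSlt i)
  refine ⟨S, fun i => ⟨hSfin i, nonempty_of_ncard_ne_zero (by exact_mod_cast (hSpos i).ne')⟩,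
    fun r hr => ?_⟩
  refine squeeze_zero' (Eventually.of_forall fun i => by positivity) ?_
    tendsto_one_div_add_atTop_nhds_zero_nat
  filter_upwards [eventually_ge_atTop ⌈r⌉₊] with i hi
  have hri : r ≤ (i : ℝ) + 1 := by
    linarith [Nat.le_ceil r, (Nat.cast_le (α := ℝ)).mpr hi]
  have hmono : ((bdry r (S i)).ncard : ℝ) ≤ (bdry ((i : ℝ) + 1) (S i)).ncard := by
    exact_mod_cast ncard_le_ncard (bdry_mono hri _) (hbg.finite_bdry (hSfin i) _)
  rw [div_le_div_iff₀ (hSpos i) (by positivity)]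
  nlinarith [hSlt i]

theorem not_amenable_iff_exists_isoperimetricWith (hbg : BoundedGeometry X) :
    ¬ Amenable X ↔ ∃ C r, 0 < C ∧ 0 < r ∧ IsoperimetricWith X C r :=
  ⟨exists_isoperimetricWith_of_not_amenable hbg,
    fun ⟨_, _, hC, hr, hiso⟩ => hiso.not_amenable hC hr⟩

end Isoperimetry

namespace IsoperimetricWith

variable {X : Type*} [MetricSpace X] {C r : ℝ}

lemma pow_mul_ncard_le_ncard_nbhd (hiso : IsoperimetricWith X C r) (hbg : BoundedGeometry X)
    (hC : 0 < C) (hr : 0 < r) (k : ℕ) {S : Set X} (hS : S.Finite) :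
    (1 + C⁻¹) ^ k * S.ncard ≤ (nbhd (k * r) S).ncard := by
  induction k with
  | zero =>
    simpa using ncard_le_ncard (subset_nbhd le_rfl S) (hbg.finite_nbhd hS 0)
  | succ k ih =>
    have hT := hbg.finite_nbhd hS (k * r)
    have hgrow : (1 + C⁻¹) * (nbhd (k * r) S).ncard ≤ (nbhd r (nbhd (k * r) S)).ncard := by
      rw [hbg.ncard_nbhd hT hr.le, Nat.cast_add, add_mul, one_mul, add_le_add_iff_left,
        inv_mul_le_iff₀ hC]
      exact hiso _ hT
    have hsub : nbhd r (nbhd (k * r) S) ⊆ nbhd ((k + 1 : ℕ) * r) S := by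
      convert nbhd_nbhd_subset r (k * r) S using 2
      push_cast; ring
    calc (1 + C⁻¹) ^ (k + 1) * S.ncard = (1 + C⁻¹) * ((1 + C⁻¹) ^ k * S.ncard) := by ring
      _ ≤ (1 + C⁻¹) * (nbhd (k * r) S).ncard := by gcongr
      _ ≤ (nbhd r (nbhd (k * r) S)).ncard := hgrow
      _ ≤ (nbhd ((k + 1 : ℕ) * r) S).ncard := by
        exact_mod_cast ncard_le_ncard hsub (hbg.finite_nbhd hS _)

lemma exists_injective_doubling (hiso : IsoperimetricWith X C r) (hbg : BoundedGeometry X)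
    (hC : 0 < C) (hr : 0 < r) :
    ∃ R, ∃ j : X × Fin 2 → X, Function.Injective j ∧ ∀ p, dist (j p) p.1 ≤ R := by
  classical
  obtain ⟨k, hk⟩ := pow_unbounded_of_one_lt (2 : ℝ) (lt_add_of_pos_right 1 (inv_pos.mpr hC))
  obtain ⟨N, hN⟩ := hbg (k * r)
  let ball (x : X) : Finset X := (hN x).1.toFinset
  have hball (x y : X) : y ∈ ball x ↔ dist y x ≤ k * r := by simp [ball]
  suffices hHall : ∀ A : Finset (X × Fin 2), A.card ≤ (A.biUnion fun p => ball p.1).card by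
    obtain ⟨j, hj, hjball⟩ :=
      (Finset.all_card_le_biUnion_card_iff_exists_injective _).mp hHall
    exact ⟨k * r, j, hj, fun p => (hball _ _).mp (hjball p)⟩
  intro A
  set F := A.image Prod.fst
  have hAF : A.card ≤ 2 * F.card := by
    calc A.card ≤ (F ×ˢ (Finset.univ : Finset (Fin 2))).card :=
          Finset.card_le_card fun p hp =>
            Finset.mem_product.mpr ⟨Finset.mem_image_of_mem _ hp, Finset.mem_univ _⟩
      _ = 2 * F.card := by simp [mul_comm]
  have hFnbhd : 2 * F.card ≤ (nbhd (k * r) (F : Set X)).ncard := by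
    have hgrow := hiso.pow_mul_ncard_le_ncard_nbhd hbg hC hr k F.finite_toSet
    rw [ncard_coe_finset] at hgrow
    have : (2 * F.card : ℝ) ≤ (nbhd (k * r) (F : Set X)).ncard := by
      nlinarith [(Nat.cast_nonneg F.card : (0 : ℝ) ≤ F.card)]
    exact_mod_cast this
  have hnbhd : nbhd (k * r) (F : Set X) ⊆ ↑(A.biUnion fun p => ball p.1) := by
    rintro z ⟨a, ha, hd⟩
    obtain ⟨p, hp, rfl⟩ := Finset.mem_image.mp ha
    exact Finset.mem_biUnion.mpr ⟨p, hp, (hball _ _).mpr hd⟩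
  have hcard := ncard_le_ncard hnbhd (Finset.finite_toSet _)
  rw [ncard_coe_finset] at hcard
  exact hAF.trans (hFnbhd.trans hcard)

end IsoperimetricWith

lemma iUnion_iterate_image_eq_union {X : Type*} (g : X → X) (A : Set X) :
    ⋃ n, g^[n] '' A = A ∪ g '' ⋃ n, g^[n] '' A := by
  conv_lhs => rw [← union_iUnion_nat_succ]
  simp only [Function.iterate_succ', image_comp, image_iUnion, Function.iterate_zero, image_id]

open scoped Classical in
noncomputable def edgeChain {X : Type*} (f : X → X) (s : Set X) : X → X → ℤ := fun z w =>
  if z ∈ s ∧ w = f z then 1 else 0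

section Chains

variable {X : Type*} [MetricSpace X]

lemma IsUFOneChain.sub {R : Type*} [NormedRing R] {b c : X → X → R} (hb : IsUFOneChain b)
    (hc : IsUFOneChain c) : IsUFOneChain (b - c) := by
  obtain ⟨⟨M, hM⟩, ⟨l, hl⟩, hloc⟩ := hb
  obtain ⟨⟨M', hM'⟩, ⟨l', hl'⟩, hloc'⟩ := hc
  have hsupp (z w : X) (h : (b - c) z w ≠ 0) : b z w ≠ 0 ∨ c z w ≠ 0 := by
    by_contra! h'
    simp [h'] at h
  refine ⟨⟨M + M', fun z w => (norm_sub_le _ _).trans (add_le_add (hM z w) (hM' z w))⟩,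
    ⟨max l l', fun z w h => ?_⟩, fun z => ((hloc z).union (hloc' z)).subset ?_⟩
  · rcases hsupp z w h with h | h
    · exact (hl z w h).trans (le_max_left _ _)
    · exact (hl' z w h).trans (le_max_right _ _)
  · rintro w (h | h) <;> rcases hsupp _ _ h with h' | h' <;> simp [h']

lemma ufBoundaryAt_sub {R : Type*} [NormedRing R] {b c : X → X → R} (hb : IsUFOneChain b)
    (hc : IsUFOneChain c) (z : X) :
    ufBoundaryAt (b - c) z = ufBoundaryAt b z - ufBoundaryAt c z := by
  have hfin {b : X → X → R} (hb : IsUFOneChain b) :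
      (fun w => b w z).HasFiniteSupport ∧ (fun w => b z w).HasFiniteSupport :=
    ⟨(hb.2.2 z).subset fun w hw => Or.inr hw, (hb.2.2 z).subset fun w hw => Or.inl hw⟩
  simp only [ufBoundaryAt, Pi.sub_apply]
  rw [finsum_sub_distrib (hfin hb).1 (hfin hc).1, finsum_sub_distrib (hfin hb).2 (hfin hc).2]
  abel

lemma BoundedGeometry.isUFOneChain (hbg : BoundedGeometry X) {R : Type*} [NormedRing R]
    {b : X → X → R} {M l : ℝ} (hM : ∀ z w, ‖b z w‖ ≤ M)
    (hl : ∀ z w, b z w ≠ 0 → dist z w ≤ l) : IsUFOneChain b := by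
  refine ⟨⟨M, hM⟩, ⟨l, hl⟩, fun z => ((hbg l).choose_spec z).1.subset ?_⟩
  rintro w (h | h)
  · exact (dist_comm w z).trans_le (hl z w h)
  · exact hl w z h

lemma isUFOneChain_edgeChain (hbg : BoundedGeometry X) {f : X → X} {L : ℝ}
    (hf : ∀ x, dist (f x) x ≤ L) (s : Set X) : IsUFOneChain (edgeChain f s) := by
  classical
  refine hbg.isUFOneChain (M := 1) (l := L) (fun z w => ?_) fun z w h => ?_
  · unfold edgeChain; split_ifs <;> simp
  · obtain ⟨-, rfl⟩ : z ∈ s ∧ w = f z := by by_contra h'; simp [edgeChain, h'] at h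
    exact dist_comm z (f z) ▸ hf z

lemma ufBoundaryAt_edgeChain {f : X → X} (hf : f.Injective) (s : Set X) (z : X) :
    ufBoundaryAt (edgeChain f s) z = (f '' s).indicator 1 z - s.indicator 1 z := by
  classical
  have hout : ∑ᶠ w, edgeChain f s z w = s.indicator 1 z := by
    rw [finsum_eq_single _ (f z) fun w hw => by simp [edgeChain, hw]]
    by_cases hz : z ∈ s <;> simp [edgeChain, hz]
  have hin : ∑ᶠ w, edgeChain f s w z = (f '' s).indicator 1 z := by
    by_cases hz : z ∈ f '' s
    · obtain ⟨x, hx, rfl⟩ := hz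
      rw [finsum_eq_single _ x fun w hw => by simp [edgeChain, hf.eq_iff, Ne.symm hw],
        indicator_of_mem (mem_image_of_mem f hx)]
      simp [edgeChain, hx]
    · rw [indicator_of_notMem hz]
      exact finsum_eq_zero_of_forall_eq_zero fun w =>
        if_neg fun h => hz ⟨w, h.1, h.2.symm⟩
  rw [ufBoundaryAt, hin, hout]

/-- Every `x` receives one unit from each of `g x` and `h x`, and passes one unit on to its
preimage if it has one; the surplus at the points outside both ranges is pushed to infinity along
their `g`-orbits. -/
lemma ufBoundsZero_one_of_injective_of_disjoint_range (hbg : BoundedGeometry X) {g h : X → X}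
    (hg : g.Injective) (hh : h.Injective) (hgh : Disjoint (range g) (range h)) {L : ℝ}
    (hgL : ∀ x, dist (g x) x ≤ L) (hhL : ∀ x, dist (h x) x ≤ L) :
    UFBoundsZero (fun _ : X => (1 : ℤ)) := by
  set roots := (range g ∪ range h)ᶜ
  set ray := ⋃ n, g^[n] '' roots
  have hray : ray.indicator (1 : X → ℤ) = roots.indicator 1 + (g '' ray).indicator 1 := by
    conv_lhs => rw [show ray = roots ∪ g '' ray from iUnion_iterate_image_eq_union g roots]
    exact indicator_union_of_disjoint (disjoint_compl_left.mono_right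
      ((image_subset_range g ray).trans subset_union_left)) 1
  have hUFg := isUFOneChain_edgeChain hbg hgL
  have hUFh := isUFOneChain_edgeChain hbg hhL
  refine ⟨edgeChain g ray - edgeChain g univ - edgeChain h univ,
    ((hUFg ray).sub (hUFg univ)).sub (hUFh univ), fun z => ?_⟩
  rw [ufBoundaryAt_sub ((hUFg ray).sub (hUFg univ)) (hUFh univ), ufBoundaryAt_sub (hUFg ray)
    (hUFg univ), ufBoundaryAt_edgeChain hg, ufBoundaryAt_edgeChain hg,
    ufBoundaryAt_edgeChain hh, congrFun hray z]
  simp only [image_univ, indicator_univ, Pi.one_apply]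
  by_cases hzg : z ∈ range g
  · have hzh : z ∉ range h := disjoint_left.mp hgh hzg
    simp [roots, indicator, hzg, hzh]
  · by_cases hzh : z ∈ range h <;> simp [roots, indicator, hzg, hzh]

lemma IsoperimetricWith.ufBoundsZero_one {C r : ℝ} (hiso : IsoperimetricWith X C r)
    (hbg : BoundedGeometry X) (hC : 0 < C) (hr : 0 < r) :
    UFBoundsZero (fun _ : X => (1 : ℤ)) := by
  obtain ⟨L, j, hj, hjL⟩ := hiso.exists_injective_doubling hbg hC hr
  refine ufBoundsZero_one_of_injective_of_disjoint_range hbg (g := fun x => j (x, 0))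
    (h := fun x => j (x, 1)) (fun x y hxy => congrArg Prod.fst (hj hxy))
    (fun x y hxy => congrArg Prod.fst (hj hxy)) ?_ (fun x => hjL (x, 0)) (fun x => hjL (x, 1))
  rw [disjoint_left]
  rintro _ ⟨x, rfl⟩ ⟨y, hxy⟩
  simpa using congrArg Prod.snd (hj hxy)

end Chains

section Converse

variable {X : Type*} [MetricSpace X] {R : Type*} [NormedRing R] {b : X → X → R} {M l : ℝ}
  {N : ℕ}

lemma sum_ufBoundaryAt_eq_sum_bdry [DecidableEq X] (hl0 : 0 ≤ l) (hl : ∀ z w, b z w ≠ 0 → dist z w ≤ l) (F : Finset X)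
    (hE : (nbhd l (F : Set X)).Finite) :
    ∑ z ∈ F, ufBoundaryAt b z = ∑ w ∈ hE.toFinset \ F, ∑ z ∈ F, (b w z - b z w) := by
  set E := hE.toFinset
  have hFE : F ⊆ E := fun z hz => hE.mem_toFinset.mpr (subset_nbhd hl0 _ hz)
  have hlocal (z : X) (hz : z ∈ F) : ufBoundaryAt b z = ∑ w ∈ E, (b w z - b z w) := by
    rw [ufBoundaryAt, Finset.sum_sub_distrib]
    congr 1 <;> refine finsum_eq_finsetSum_of_support_subset _ fun w hw => ?_
    · exact hE.mem_toFinset.mpr ⟨z, hz, hl w z hw⟩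
    · exact hE.mem_toFinset.mpr ⟨z, hz, dist_comm z w ▸ hl z w hw⟩
  have hinternal : ∑ w ∈ F, ∑ z ∈ F, (b w z - b z w) = 0 := by
    simp only [Finset.sum_sub_distrib]
    rw [Finset.sum_comm, sub_self]
  rw [Finset.sum_congr rfl hlocal, Finset.sum_comm, ← Finset.sum_sdiff hFE, hinternal, add_zero]

lemma norm_sum_sub_le (hM : ∀ z w, ‖b z w‖ ≤ M) (hl : ∀ z w, b z w ≠ 0 → dist z w ≤ l)
    (hN : ∀ x, {y : X | dist y x ≤ l}.Finite ∧ {y : X | dist y x ≤ l}.ncard ≤ N) (F : Finset X)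
    (w : X) : ‖∑ z ∈ F, (b w z - b z w)‖ ≤ 2 * M * N := by
  classical
  set G := F.filter fun z => dist z w ≤ l
  have hsum : ∑ z ∈ G, (b w z - b z w) = ∑ z ∈ F, (b w z - b z w) :=
    Finset.sum_filter_of_ne fun z _ hz => by
      by_contra hfar
      have h1 : b w z = 0 := by
        by_contra h
        exact hfar ((dist_comm z w).trans_le (hl w z h))
      have h2 : b z w = 0 := by
        by_contra h
        exact hfar (hl z w h)
      simp [h1, h2] at hz
  have hG : (G.card : ℝ) ≤ N := by
    have : G.card ≤ N :=
      calc G.card = (G : Set X).ncard := (ncard_coe_finset G).symm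
        _ ≤ _ := ncard_le_ncard (fun z hz => (Finset.mem_filter.mp hz).2) (hN w).1
        _ ≤ N := (hN w).2
    exact_mod_cast this
  have hM0 : 0 ≤ M := (norm_nonneg _).trans (hM w w)
  rw [← hsum]
  calc ‖∑ z ∈ G, (b w z - b z w)‖ ≤ ∑ z ∈ G, ‖b w z - b z w‖ := norm_sum_le _ _
    _ ≤ G.card • (2 * M) := Finset.sum_le_card_nsmul _ _ _ fun z _ =>
        (norm_sub_le _ _).trans (by linarith [hM w z, hM z w])
    _ ≤ 2 * M * N := by rw [nsmul_eq_mul, mul_comm]; gcongr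

lemma norm_sum_ufBoundaryAt_le (hbg : BoundedGeometry X) (hM : ∀ z w, ‖b z w‖ ≤ M)
    (hl0 : 0 ≤ l) (hl : ∀ z w, b z w ≠ 0 → dist z w ≤ l)
    (hN : ∀ x, {y : X | dist y x ≤ l}.Finite ∧ {y : X | dist y x ≤ l}.ncard ≤ N) (F : Finset X) :
    ‖∑ z ∈ F, ufBoundaryAt b z‖ ≤ 2 * M * N * (bdry l (F : Set X)).ncard := by
  classical
  have hE := hbg.finite_nbhd F.finite_toSet l
  have hcard : (hE.toFinset \ F).card = (bdry l (F : Set X)).ncard := by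
    rw [← ncard_coe_finset, Finset.coe_sdiff, hE.coe_toFinset, bdry]
  rw [sum_ufBoundaryAt_eq_sum_bdry hl0 hl F hE]
  calc ‖∑ w ∈ hE.toFinset \ F, ∑ z ∈ F, (b w z - b z w)‖
      ≤ ∑ w ∈ hE.toFinset \ F, ‖∑ z ∈ F, (b w z - b z w)‖ := norm_sum_le _ _
    _ ≤ (hE.toFinset \ F).card • (2 * M * N) :=
        Finset.sum_le_card_nsmul _ _ _ fun w _ => norm_sum_sub_le hM hl hN F w
    _ = 2 * M * N * (bdry l (F : Set X)).ncard := by rw [nsmul_eq_mul, hcard, mul_comm]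

lemma exists_isoperimetricWith_of_ufBoundsZero (hbg : BoundedGeometry X)
    (h : UFBoundsZero (fun _ : X => (1 : ℤ))) :
    ∃ C r, 0 < C ∧ 0 < r ∧ IsoperimetricWith X C r := by
  obtain ⟨b, ⟨⟨M, hM⟩, ⟨l, hl⟩, -⟩, hb⟩ := h
  obtain ⟨N, hN⟩ := hbg (max l 1)
  refine ⟨2 * max M 0 * N + 1, max l 1, by positivity, by positivity, fun S hS => ?_⟩
  have hbound := norm_sum_ufBoundaryAt_le hbg (fun z w => (hM z w).trans (le_max_left M 0))
    (by positivity) (fun z w h => (hl z w h).trans (le_max_left l 1)) hN hS.toFinset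
  rw [← Finset.sum_congr rfl fun z _ => hb z, hS.coe_toFinset] at hbound
  simp only [Finset.sum_const, nsmul_eq_mul, mul_one, Int.norm_natCast] at hbound
  rw [ncard_eq_toFinset_card S hS]
  nlinarith [(Nat.cast_nonneg (bdry (max l 1) S).ncard : (0 : ℝ) ≤ _)]

end Converse

theorem stmt14_general {X : Type*} [MetricSpace X]
    (hbg : BoundedGeometry X) :
    ¬ Amenable X ↔ UFBoundsZero (fun _ : X => (1 : ℤ)) := by
  rw [not_amenable_iff_exists_isoperimetricWith hbg]
  exact ⟨fun ⟨_, _, hC, hr, hiso⟩ => hiso.ufBoundsZero_one hbg hC hr,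
    exists_isoperimetricWith_of_ufBoundsZero hbg⟩

/-- A uniformly discrete space of bounded geometry is non-amenable iff its
fundamental class (the constant-`1` 0-chain) vanishes in `H₀^{uf}(X; ℤ)`. -/
theorem stmt14 {X : Type*} [MetricSpace X]
    (hud : UniformlyDiscrete X) (hbg : BoundedGeometry X) :
    ¬ Amenable X ↔ UFBoundsZero (fun _ : X => (1 : ℤ)) :=
  stmt14_general hbg
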